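/- arXiv:2504.00395 — 4 statements merged into one kernel-verified Lean document; each statement's English description precedes it below -/
import Mathlib

section
/- Let S be a nonempty bounded subset of ℝ^D, let U > 0, and let φ : ℝ^D → ℝ^K (encoder) and θ : ℝ^K → ℝ^D (decoder) be arbitrary functions. Assume: (i) for every x ∈ S, ‖x − θ(φ(x))‖₂ ≤ U/2; and (ii) there is a finite family of finite sets R_1, …, R_M ⊆ ℝ^K such that for every x ∈ S there exist m ∈ {1,…,M} and ẑ ∈ R_m with ‖θ(φ(x)) − θ(ẑ)‖₂ ≤ U/2. Then the total cardinality Σ_{m=1}^M |R_m| is at least the U-essence E_{S,U}, and consequently log₂(Σ_{m=1}^M |R_m|) ≥ log₂(E_{S,U}). (This is the paper's Theorem 1: the essential minimum description length of a Spectrum VAE essentially compatible with the data distribution is at least log₂ of the U-essence of the data.) -/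
/-- A finite set `F ⊆ ℝ^D` is a valid `U`-quantization strategy for `S ⊆ ℝ^D` if
every `x ∈ S` is within Euclidean distance `U` of some `f ∈ F`. -/
def ValidQuant {D : ℕ} (U : ℝ) (S : Set (EuclideanSpace ℝ (Fin D)))
    (F : Finset (EuclideanSpace ℝ (Fin D))) : Prop :=
  ∀ x ∈ S, ∃ f ∈ F, ‖x - f‖ ≤ U

/-- The `U`-essence of `S`: the minimal cardinality of a valid `U`-quantization
strategy for `S`. -/
noncomputable def essence {D : ℕ} (S : Set (EuclideanSpace ℝ (Fin D))) (U : ℝ) : ℕ :=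
  sInf {n : ℕ | ∃ F : Finset (EuclideanSpace ℝ (Fin D)), ValidQuant U S F ∧ F.card = n}

/-- **Theorem 1** (essential MDL is at least `log₂` of the `U`-essence). -/
theorem spectrumVAE_MDL_ge_log_essence {D K M : ℕ}
    (S : Set (EuclideanSpace ℝ (Fin D))) (hS : S.Nonempty)
    (hSb : Bornology.IsBounded S) (U : ℝ) (hU : 0 < U)
    (φ : EuclideanSpace ℝ (Fin D) → EuclideanSpace ℝ (Fin K))
    (θ : EuclideanSpace ℝ (Fin K) → EuclideanSpace ℝ (Fin D))
    (R : Fin M → Finset (EuclideanSpace ℝ (Fin K)))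
    (h1 : ∀ x ∈ S, ‖x - θ (φ x)‖ ≤ U / 2)
    (h2 : ∀ x ∈ S, ∃ m : Fin M, ∃ zh ∈ R m, ‖θ (φ x) - θ zh‖ ≤ U / 2) :
    essence S U ≤ ∑ m : Fin M, (R m).card ∧
      Real.logb 2 (essence S U) ≤ Real.logb 2 (∑ m : Fin M, (R m).card) := by
  have key : essence S U ≤ ∑ m : Fin M, (R m).card := by
    classical
    set F : Finset (EuclideanSpace ℝ (Fin D)) :=
      (Finset.univ.biUnion fun m : Fin M => R m).image θ with hF
    have hvalid : ValidQuant U S F := by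
      intro x hx
      obtain ⟨m, zh, hzh, hd⟩ := h2 x hx
      refine ⟨θ zh, ?_, ?_⟩
      · exact Finset.mem_image_of_mem θ (Finset.mem_biUnion.2 ⟨m, Finset.mem_univ m, hzh⟩)
      · calc ‖x - θ zh‖ = ‖(x - θ (φ x)) + (θ (φ x) - θ zh)‖ := by rw [sub_add_sub_cancel]
          _ ≤ ‖x - θ (φ x)‖ + ‖θ (φ x) - θ zh‖ := norm_add_le _ _
          _ ≤ U / 2 + U / 2 := add_le_add (h1 x hx) hd
          _ = U := by ring
    have h1' : essence S U ≤ F.card :=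
      Nat.sInf_le ⟨F, hvalid, rfl⟩
    refine h1'.trans ?_
    calc F.card ≤ (Finset.univ.biUnion fun m : Fin M => R m).card :=
          Finset.card_image_le
      _ ≤ ∑ m : Fin M, (R m).card := Finset.card_biUnion_le
  refine ⟨key, ?_⟩
  rcases Nat.eq_zero_or_pos (essence S U) with h0 | hpos
  · rw [h0]
    simp only [Nat.cast_zero, Real.logb_zero]
    rcases Nat.eq_zero_or_pos (∑ m : Fin M, (R m).card) with hn | hn
    · have : (∑ m : Fin M, ((R m).card : ℝ)) = 0 := by exact_mod_cast hn
      simp [this]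
    · exact Real.logb_nonneg one_lt_two (by exact_mod_cast hn)
  · exact Real.logb_le_logb_of_le one_lt_two (by exact_mod_cast hpos) (by exact_mod_cast key)
end

section
/- Let 0 < a < b, let U > 0, let P ⊆ {0,…,K−1} be a pattern with positive perturbation bounds α_k > 0 for k ∈ P, and let θ : ℝ^K → ℝ^D be a decoder that is U-robust with respect to P with bounds (α_k). For each k ∈ P let Q_k be the least positive integer strictly greater than (b − a)/(2α_k), and let R_P ⊆ ℝ^K be the quantization grid for pattern P with these Q_k. Then R_P is finite with |R_P| = ∏_{k∈P} Q_k, and for every spectrum z preserved by P there exists ẑ ∈ R_P with ‖θ(z) − θ(ẑ)‖₂ ≤ U. (Existence of a U-representation set for a U-robust pattern, Section 3.2.) -/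
/-!
Splitting `[a, b]` into `Q` cells of width `(b - a) / Q`, every point lies within half a cell
width of a cell midpoint, and distinct cells have distinct midpoints. With
`Q_k = ⌊(b - a) / (2 α_k)⌋ + 1` that half width is at most `α_k`, so the grid point built from
the nearest midpoints in each coordinate is an `α`-perturbation of the spectrum, and
`U`-robustness bounds the reconstruction error.
-/

attribute [local instance] Classical.propDecidable

/-- A spectrum `z ∈ ℝ^K` is preserved by a pattern `P ⊆ {0,…,K-1}` if `z k ∈ [a,b]`
for every `k ∈ P` and `z k = 0` for every `k ∉ P`. -/
def Preserved {K : ℕ} (a b : ℝ) (P : Finset (Fin K))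
    (z : EuclideanSpace ℝ (Fin K)) : Prop :=
  (∀ k ∈ P, z k ∈ Set.Icc a b) ∧ ∀ k ∉ P, z k = 0

/-- A decoder `θ` is `U`-robust w.r.t. pattern `P` with perturbation bounds `α` if the
reconstructions of any two spectra preserved by `P` that differ by at most `α k` on
each `k ∈ P` are within `U` of each other. -/
def URobust {K D : ℕ} (a b U : ℝ) (P : Finset (Fin K)) (α : Fin K → ℝ)
    (θ : EuclideanSpace ℝ (Fin K) → EuclideanSpace ℝ (Fin D)) : Prop :=
  ∀ z z' : EuclideanSpace ℝ (Fin K), Preserved a b P z → Preserved a b P z' →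
    (∀ k ∈ P, |z k - z' k| ≤ α k) → ‖θ z - θ z'‖ ≤ U

/-- The quantization-grid spectrum for pattern `P`: given a choice `f` of indices
`i_k` for `k ∈ P`, the spectrum whose `k`-th coordinate is the midpoint
`a + (2 i_k - 1)(b - a)/(2 Q_k)` for `k ∈ P` and `0` for `k ∉ P`. -/
noncomputable def gridSpec {K : ℕ} (a b : ℝ) (P : Finset (Fin K)) (Q : Fin K → ℕ)
    (f : ∀ k ∈ P, ℕ) : EuclideanSpace ℝ (Fin K) :=
  WithLp.toLp 2 (fun k => if h : k ∈ P then a + (2 * (f k h : ℝ) - 1) * (b - a) / (2 * (Q k : ℝ)) else 0)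

/-- The quantization grid for pattern `P`: all grid spectra obtained from choices
`(i_k)_{k∈P}` with `1 ≤ i_k ≤ Q_k`. -/
noncomputable def gridFinset {K : ℕ} (a b : ℝ) (P : Finset (Fin K)) (Q : Fin K → ℕ) :
    Finset (EuclideanSpace ℝ (Fin K)) :=
  (P.pi fun k => Finset.Icc 1 (Q k)).image (gridSpec a b P Q)

section Grid

variable {K : ℕ} {a b : ℝ} {P : Finset (Fin K)} {Q : Fin K → ℕ}

lemma grid_midpoint_mem_Icc (hab : a ≤ b) {N i : ℕ} (hi : i ∈ Finset.Icc 1 N) :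
    a + (2 * (i : ℝ) - 1) * (b - a) / (2 * N) ∈ Set.Icc a b := by
  rw [Finset.mem_Icc] at hi
  have hi₁ : (1 : ℝ) ≤ i := by exact_mod_cast hi.1
  have hiN : (i : ℝ) ≤ N := by exact_mod_cast hi.2
  have hN : (0 : ℝ) < N := by linarith
  constructor
  · exact le_add_of_nonneg_right (div_nonneg (mul_nonneg (by linarith) (by linarith)) (by positivity))
  · rw [← le_sub_iff_add_le', div_le_iff₀ (by positivity)]
    nlinarith

lemma exists_abs_sub_grid_midpoint_le (hab : a < b) {N : ℕ} (hN : 1 ≤ N) {z : ℝ}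
    (hz : z ∈ Set.Icc a b) :
    ∃ i ∈ Finset.Icc 1 N,
      |z - (a + (2 * (i : ℝ) - 1) * (b - a) / (2 * N))| ≤ (b - a) / (2 * N) := by
  have hN' : (0 : ℝ) < N := by exact_mod_cast hN
  have hba : 0 < b - a := sub_pos.2 hab
  -- `t` is the position of `z` measured in cell widths, so `z` lies in cell `⌈t⌉`
  set t := (z - a) * N / (b - a) with ht
  have ht₀ : 0 ≤ t := div_nonneg (mul_nonneg (sub_nonneg.2 hz.1) hN'.le) hba.le
  have htN : t ≤ N := by
    rw [ht, div_le_iff₀ hba]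
    nlinarith [hz.2]
  set i := max 1 ⌈t⌉₊ with hi
  have hti : t ≤ i := (Nat.le_ceil t).trans (by exact_mod_cast le_max_right 1 ⌈t⌉₊)
  have hit : (i : ℝ) - 1 ≤ t := by
    rcases max_cases 1 ⌈t⌉₊ with ⟨h, -⟩ | ⟨h, -⟩ <;> rw [hi, h]
    · simpa using ht₀
    · linarith [Nat.ceil_lt_add_one ht₀]
  refine ⟨i, Finset.mem_Icc.2 ⟨le_max_left _ _, max_le hN (Nat.ceil_le.2 htN)⟩, ?_⟩
  have hdiff : z - (a + (2 * (i : ℝ) - 1) * (b - a) / (2 * N))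
      = (2 * t - 2 * i + 1) * ((b - a) / (2 * N)) := by
    rw [ht]
    field_simp
    ring
  rw [hdiff, abs_mul, abs_of_pos (a := (b - a) / (2 * N)) (by positivity)]
  exact mul_le_of_le_one_left (by positivity) (abs_le.2 ⟨by linarith, by linarith⟩)

lemma card_gridFinset (hab : a ≠ b) (P : Finset (Fin K)) (Q : Fin K → ℕ) :
    (gridFinset a b P Q).card = ∏ k ∈ P, Q k := by
  rw [gridFinset, Finset.card_image_of_injOn, Finset.card_pi]
  · simp only [Nat.card_Icc, add_tsub_cancel_right]
  intro f hf g _ hfg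
  funext k hk
  obtain ⟨hf₁, hfQ⟩ := Finset.mem_Icc.1 (Finset.mem_pi.1 hf k hk)
  have hN : (0 : ℝ) < Q k := Nat.cast_pos.2 (by omega)
  have hcoord := congrArg (· k) hfg
  simp only [gridSpec, WithLp.ofLp_toLp, dif_pos hk] at hcoord
  field_simp at hcoord
  have hprod : (b - a) * ((f k hk : ℝ) - g k hk) = 0 := by linarith
  rcases mul_eq_zero.1 hprod with h | h
  · exact absurd (sub_eq_zero.1 h).symm hab
  · exact_mod_cast sub_eq_zero.1 h

lemma preserved_gridSpec (hab : a ≤ b) {f : ∀ k ∈ P, ℕ}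
    (hf : f ∈ P.pi fun k => Finset.Icc 1 (Q k)) : Preserved a b P (gridSpec a b P Q f) :=
  ⟨fun k hk => by simpa [gridSpec, hk] using grid_midpoint_mem_Icc hab (Finset.mem_pi.1 hf k hk),
    fun k hk => by simp [gridSpec, hk]⟩

lemma exists_gridSpec_near (hab : a < b) (hQ : ∀ k ∈ P, 1 ≤ Q k) {z : EuclideanSpace ℝ (Fin K)}
    (hz : Preserved a b P z) :
    ∃ f ∈ P.pi fun k => Finset.Icc 1 (Q k),
      ∀ k ∈ P, |z k - gridSpec a b P Q f k| ≤ (b - a) / (2 * Q k) := by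
  choose f hf hnear using fun k hk => exists_abs_sub_grid_midpoint_le hab (hQ k hk) (hz.1 k hk)
  exact ⟨f, Finset.mem_pi.2 hf, fun k hk => by simpa [gridSpec, hk] using hnear k hk⟩

end Grid

lemma div_two_mul_floor_div_two_mul_add_one_le (c : ℝ) {α : ℝ} (hα : 0 < α) :
    c / (2 * ((⌊c / (2 * α)⌋₊ + 1 : ℕ) : ℝ)) ≤ α := by
  have hfloor := Nat.lt_floor_add_one (c / (2 * α))
  rw [div_lt_iff₀ (by positivity)] at hfloor
  rw [div_le_iff₀ (by positivity)]
  push_cast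
  linarith

theorem exists_U_representation_set_general {K D : ℕ} (a b U : ℝ) (hab : a < b)
    (P : Finset (Fin K)) (α : Fin K → ℝ) (hα : ∀ k ∈ P, 0 < α k)
    (θ : EuclideanSpace ℝ (Fin K) → EuclideanSpace ℝ (Fin D))
    (hrob : URobust a b U P α θ)
    (Q : Fin K → ℕ) (hQ : ∀ k ∈ P, Q k = Nat.floor ((b - a) / (2 * α k)) + 1) :
    (gridFinset a b P Q).card = ∏ k ∈ P, Q k ∧
      ∀ z : EuclideanSpace ℝ (Fin K), Preserved a b P z →
        ∃ zh ∈ gridFinset a b P Q, ‖θ z - θ zh‖ ≤ U := by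
  have hQ₁ : ∀ k ∈ P, 1 ≤ Q k := fun k hk => by rw [hQ k hk]; exact Nat.le_add_left 1 _
  refine ⟨card_gridFinset hab.ne P Q, fun z hz => ?_⟩
  obtain ⟨f, hf, hnear⟩ := exists_gridSpec_near hab hQ₁ hz
  refine ⟨gridSpec a b P Q f, Finset.mem_image_of_mem _ hf,
    hrob z _ hz (preserved_gridSpec hab.le hf) fun k hk => (hnear k hk).trans ?_⟩
  rw [hQ k hk]
  exact div_two_mul_floor_div_two_mul_add_one_le _ (hα k hk)

/-- Existence of a `U`-representation set for a `U`-robust pattern (Section 3.2):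
with `Q_k = ⌊(b-a)/(2α_k)⌋ + 1`, the quantization grid `R_P` for pattern `P` has
cardinality `∏_{k∈P} Q_k`, and every spectrum preserved by `P` has a quantized
representative in `R_P` whose reconstruction is within `U`. -/
theorem exists_U_representation_set {K D : ℕ} (a b U : ℝ) (ha : 0 < a) (hab : a < b)
    (hU : 0 < U) (P : Finset (Fin K)) (α : Fin K → ℝ) (hα : ∀ k ∈ P, 0 < α k)
    (θ : EuclideanSpace ℝ (Fin K) → EuclideanSpace ℝ (Fin D))
    (hrob : URobust a b U P α θ)
    (Q : Fin K → ℕ) (hQ : ∀ k ∈ P, Q k = Nat.floor ((b - a) / (2 * α k)) + 1) :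
    (gridFinset a b P Q).card = ∏ k ∈ P, Q k ∧
      ∀ z : EuclideanSpace ℝ (Fin K), Preserved a b P z →
        ∃ zh ∈ gridFinset a b P Q, ‖θ z - θ zh‖ ≤ U :=
  exists_U_representation_set_general a b U hab P α hα θ hrob Q hQ
end

section
/- Let N, M be natural numbers, let s : Fin N → Fin M be a labeling (assigning to each of N spectra its spiking pattern among M observed patterns), and let n be a natural number with n + 1 ≤ N. Then cov(n) · (N − n) ≤ cov(n+1) · (n + 1); equivalently, the probability that a uniformly random j-element subset of the N spectra observes all patterns is nondecreasing in j, i.e., cov(n)/C(N,n) ≤ cov(n+1)/C(N,n+1). -/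
/-!
Adding an element to a set that observes all patterns gives a set that still does, so the
observing sets form an upper set `𝒜` of `Finset (Fin N)`. The local LYM inequality, applied to
the complements of the `n`-element members of `𝒜`, bounds `#𝒜ₙ · (N - n)` by `#𝒜ₙ₊₁ · (n + 1)`;
the ratio form follows from `C(N, n+1) · (n+1) = C(N, n) · (N - n)`.
-/

attribute [local instance] Classical.propDecidable

/-- `cov N M s j`: the number of `j`-element subsets `T` of `Fin N` that observe all
`M` patterns under the labeling `s`, i.e. for every `m : Fin M` some `i ∈ T` has
`s i = m`. -/
noncomputable def cov (N M : ℕ) (s : Fin N → Fin M) (j : ℕ) : ℕ :=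
  (((Finset.univ : Finset (Fin N)).powersetCard j).filter
    (fun T => ∀ m : Fin M, ∃ i ∈ T, s i = m)).card

open Finset
open scoped FinsetFamily

namespace Finset

variable {α : Type*} [DecidableEq α] [Fintype α]

theorem card_mul_le_card_upShadow_mul {𝒜 : Finset (Finset α)} {r : ℕ}
    (h𝒜 : (𝒜 : Set (Finset α)).Sized r) :
    #𝒜 * (Fintype.card α - r) ≤ #(∂⁺ 𝒜) * (r + 1) := by
  rcases le_or_gt r (Fintype.card α) with hr | hr
  · have := card_mul_le_card_shadow_mul (h𝒜.compls (α := α))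
    rwa [card_compls, shadow_compls, card_compls, Nat.sub_sub_self hr] at this
  · simp [Nat.sub_eq_zero_of_le hr.le]

theorem _root_.IsUpperSet.card_slice_mul_le {𝒜 : Finset (Finset α)}
    (h𝒜 : IsUpperSet (𝒜 : Set (Finset α))) (r : ℕ) :
    #(𝒜 # r) * (Fintype.card α - r) ≤ #(𝒜 # (r + 1)) * (r + 1) := by
  have hsub : ∂⁺ (𝒜 # r) ⊆ 𝒜 # (r + 1) := by
    intro t ht
    obtain ⟨s, hs, hst, hcard⟩ := mem_upShadow_iff_exists_mem_card_add_one.1 ht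
    rw [mem_slice] at hs ⊢
    exact ⟨h𝒜 hst hs.1, by rw [hcard, hs.2]⟩
  calc #(𝒜 # r) * (Fintype.card α - r) ≤ #(∂⁺ (𝒜 # r)) * (r + 1) :=
        card_mul_le_card_upShadow_mul sized_slice
    _ ≤ #(𝒜 # (r + 1)) * (r + 1) := Nat.mul_le_mul_right _ (card_le_card hsub)

end Finset

theorem Nat.div_choose_le_div_choose_succ {𝕜 : Type*} [Semifield 𝕜] [LinearOrder 𝕜]
    [IsStrictOrderedRing 𝕜] {a b n r : ℕ} (hr : r + 1 ≤ n) (h : a * (n - r) ≤ b * (r + 1)) :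
    (a : 𝕜) / n.choose r ≤ b / n.choose (r + 1) := by
  rw [div_le_div_iff₀ (by exact_mod_cast Nat.choose_pos (by omega))
    (by exact_mod_cast Nat.choose_pos hr)]
  have key : a * n.choose (r + 1) * (r + 1) ≤ b * n.choose r * (r + 1) :=
    calc a * n.choose (r + 1) * (r + 1) = a * (n - r) * n.choose r := by
          rw [mul_assoc, Nat.choose_succ_right_eq]; ring
      _ ≤ b * (r + 1) * n.choose r := Nat.mul_le_mul_right _ h
      _ = b * n.choose r * (r + 1) := by ring
  exact_mod_cast Nat.le_of_mul_le_mul_right key r.succ_pos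

noncomputable def observingSets {N M : ℕ} (s : Fin N → Fin M) : Finset (Finset (Fin N)) :=
  univ.filter fun T => ∀ m : Fin M, ∃ i ∈ T, s i = m

theorem isUpperSet_observingSets {N M : ℕ} (s : Fin N → Fin M) :
    IsUpperSet (observingSets s : Set (Finset (Fin N))) := by
  intro T T' hTT' hT
  simp only [observingSets, coe_filter, mem_univ, true_and, Set.mem_ofPred_eq] at hT ⊢
  intro m
  obtain ⟨i, hi, hsi⟩ := hT m
  exact ⟨i, hTT' hi, hsi⟩

theorem cov_eq_card_slice_observingSets (N M : ℕ) (s : Fin N → Fin M) (j : ℕ) :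
    cov N M s j = #((observingSets s) # j) := by
  unfold cov
  congr 1
  ext T
  simp [observingSets, mem_slice, and_comm]

/-- Monotonicity underlying the dominant ratio (Section 3.3):
`cov(n) · (N - n) ≤ cov(n+1) · (n+1)`, equivalently the probability that a uniformly
random selection of spectra observes all spiking patterns is nondecreasing in the
number of selected spectra: `cov(n)/C(N,n) ≤ cov(n+1)/C(N,n+1)`. -/
theorem cov_ratio_monotone (N M : ℕ) (s : Fin N → Fin M) (n : ℕ) (hn : n + 1 ≤ N) :
    cov N M s n * (N - n) ≤ cov N M s (n + 1) * (n + 1) ∧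
      (cov N M s n : ℝ) / (N.choose n : ℝ) ≤
        (cov N M s (n + 1) : ℝ) / (N.choose (n + 1) : ℝ) := by
  have hmul : cov N M s n * (N - n) ≤ cov N M s (n + 1) * (n + 1) := by
    simpa only [cov_eq_card_slice_observingSets, Fintype.card_fin] using
      (isUpperSet_observingSets s).card_slice_mul_le n
  exact ⟨hmul, Nat.div_choose_le_div_choose_succ hn hmul⟩
end

section
/- Let S be a nonempty bounded subset of ℝ^D, let U > 0 and 0 < a < b, and let φ : ℝ^D → ℝ^K and θ : ℝ^K → ℝ^D. Suppose there are patterns P_1, …, P_M ⊆ {0,…,K−1} with positive perturbation bounds α_{m,k} > 0 (k ∈ P_m) such that: (i) for every x ∈ S, ‖x − θ(φ(x))‖₂ ≤ U/2 and φ(x) is preserved by some pattern P_m; and (ii) for each m, the decoder θ is (U/2)-robust with respect to P_m with bounds (α_{m,k}). For each m and k ∈ P_m let Q_{m,k} be the least positive integer strictly greater than (b − a)/(2α_{m,k}). Then Σ_{m=1}^{M} ∏_{k∈P_m} Q_{m,k} ≥ E_{S,U}, where an empty product equals 1. (Combined form of Theorem 1: the total size of the quantization grids of the observed spiking patterns is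 at least the U-essence of the data.) -/
attribute [local instance] Classical.propDecidable

/-!
Cover `[a, b]` by the `⌊(b - a)/(2α)⌋ + 1` points `a + α + 2αj` (clipped at `b`): every
`t ∈ [a, b]` lies within `α` of one of them. Taking such a grid in each coordinate of a
pattern `P_m` gives `∏_{k ∈ P_m} Q_{m,k}` grid spectra, each preserved by `P_m`, and every
spectrum preserved by `P_m` is within `α_{m,k}` of one of them coordinatewise. By robustness,
the decoded grid spectra of all patterns form a `U`-quantization strategy for `S`: the sample
`x` is within `U/2` of `θ(φ x)`, which is within `U/2` of the decoded nearest grid spectrum.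
-/

open Finset

lemma essence_le_card {D : ℕ} {S : Set (EuclideanSpace ℝ (Fin D))} {U : ℝ}
    {F : Finset (EuclideanSpace ℝ (Fin D))} (hF : ValidQuant U S F) :
    essence S U ≤ F.card :=
  Nat.sInf_le ⟨F, hF, rfl⟩

noncomputable def gridPoint (a b α : ℝ) (j : ℕ) : ℝ :=
  min b (a + α + 2 * α * j)

section GridPoint

variable {a b α : ℝ}

lemma gridPoint_mem_Icc (hα : 0 ≤ α) (hab : a ≤ b) (j : ℕ) :
    gridPoint a b α j ∈ Set.Icc a b := by
  have : 0 ≤ 2 * α * j := by positivity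
  exact ⟨le_min hab (by linarith), min_le_left _ _⟩

lemma exists_gridPoint_near (hα : 0 < α) {t : ℝ} (ht : t ∈ Set.Icc a b) :
    ∃ j < ⌊(b - a) / (2 * α)⌋₊ + 1, |t - gridPoint a b α j| ≤ α := by
  have h2α : 0 < 2 * α := by positivity
  set j := ⌊(t - a) / (2 * α)⌋₊
  have hj_le : j * (2 * α) ≤ t - a :=
    (le_div_iff₀ h2α).1 (Nat.floor_le (div_nonneg (by linarith [ht.1]) h2α.le))
  have hj_gt : t - a < (j + 1) * (2 * α) := (div_lt_iff₀ h2α).1 (Nat.lt_floor_add_one _)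
  refine ⟨j, Nat.lt_succ_of_le (Nat.floor_le_floor ?_), abs_le.2 ⟨?_, ?_⟩⟩
  · exact div_le_div_of_nonneg_right (by linarith [ht.2]) h2α.le
  · have : gridPoint a b α j ≤ a + α + 2 * α * j := min_le_right _ _
    linarith
  · have : t - α ≤ gridPoint a b α j := le_min (by linarith [ht.2]) (by linarith)
    linarith

end GridPoint

section GridSpectrum

variable {K : ℕ} {a b : ℝ} {P : Finset (Fin K)} {α : Fin K → ℝ}

noncomputable def gridSpectrum (a b : ℝ) (P : Finset (Fin K)) (α : Fin K → ℝ)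
    (g : ∀ k ∈ P, ℕ) : EuclideanSpace ℝ (Fin K) :=
  WithLp.toLp 2 fun k => if h : k ∈ P then gridPoint a b (α k) (g k h) else 0

noncomputable def gridIndices (a b : ℝ) (P : Finset (Fin K)) (α : Fin K → ℝ) :
    Finset (∀ k ∈ P, ℕ) :=
  P.pi fun k => range (⌊(b - a) / (2 * α k)⌋₊ + 1)

lemma preserved_gridSpectrum (hα : ∀ k ∈ P, 0 < α k) (hab : a ≤ b) (g : ∀ k ∈ P, ℕ) :
    Preserved a b P (gridSpectrum a b P α g) := by
  refine ⟨fun k hk => ?_, fun k hk => ?_⟩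
  · simpa [gridSpectrum, hk] using gridPoint_mem_Icc (hα k hk).le hab (g k hk)
  · simp [gridSpectrum, hk]

lemma exists_gridSpectrum_near (hα : ∀ k ∈ P, 0 < α k) {z : EuclideanSpace ℝ (Fin K)}
    (hz : Preserved a b P z) :
    ∃ g ∈ gridIndices a b P α, ∀ k ∈ P, |z k - gridSpectrum a b P α g k| ≤ α k := by
  choose! j hj_lt hj_near using fun k (hk : k ∈ P) => exists_gridPoint_near (hα k hk) (hz.1 k hk)
  refine ⟨fun k _ => j k, mem_pi.2 fun k hk => mem_range.2 (hj_lt k hk), fun k hk => ?_⟩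
  simpa [gridSpectrum, hk] using hj_near k hk

end GridSpectrum

section GridCodebook

variable {K D : ℕ} {a b r : ℝ} {P : Finset (Fin K)} {α : Fin K → ℝ}
  {θ : EuclideanSpace ℝ (Fin K) → EuclideanSpace ℝ (Fin D)}

noncomputable def gridCodebook (θ : EuclideanSpace ℝ (Fin K) → EuclideanSpace ℝ (Fin D))
    (a b : ℝ) (P : Finset (Fin K)) (α : Fin K → ℝ) : Finset (EuclideanSpace ℝ (Fin D)) :=
  (gridIndices a b P α).image fun g => θ (gridSpectrum a b P α g)

lemma card_gridCodebook_le :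
    (gridCodebook θ a b P α).card ≤ ∏ k ∈ P, (⌊(b - a) / (2 * α k)⌋₊ + 1) := by
  refine card_image_le.trans_eq ?_
  simp [gridIndices, card_pi]

lemma URobust.exists_mem_gridCodebook_near (hθ : URobust a b r P α θ)
    (hα : ∀ k ∈ P, 0 < α k) (hab : a ≤ b) {z : EuclideanSpace ℝ (Fin K)}
    (hz : Preserved a b P z) : ∃ f ∈ gridCodebook θ a b P α, ‖θ z - f‖ ≤ r := by
  obtain ⟨g, hg, hnear⟩ := exists_gridSpectrum_near hα hz
  exact ⟨_, mem_image_of_mem _ hg, hθ _ _ hz (preserved_gridSpectrum hα hab g) hnear⟩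

end GridCodebook

theorem total_grid_size_ge_essence_general {D K M : ℕ}
    (S : Set (EuclideanSpace ℝ (Fin D)))
    (U a b : ℝ) (hab : a < b)
    (φ : EuclideanSpace ℝ (Fin D) → EuclideanSpace ℝ (Fin K))
    (θ : EuclideanSpace ℝ (Fin K) → EuclideanSpace ℝ (Fin D))
    (P : Fin M → Finset (Fin K)) (α : Fin M → Fin K → ℝ)
    (hα : ∀ m : Fin M, ∀ k ∈ P m, 0 < α m k)
    (h1 : ∀ x ∈ S, ‖x - θ (φ x)‖ ≤ U / 2 ∧ ∃ m : Fin M, Preserved a b (P m) (φ x))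
    (h2 : ∀ m : Fin M, URobust a b (U / 2) (P m) (α m) θ)
    (Q : Fin M → Fin K → ℕ)
    (hQ : ∀ m : Fin M, ∀ k ∈ P m, Q m k = Nat.floor ((b - a) / (2 * α m k)) + 1) :
    essence S U ≤ ∑ m : Fin M, ∏ k ∈ P m, Q m k := by
  set F := univ.biUnion fun m => gridCodebook θ a b (P m) (α m)
  have hF : ValidQuant U S F := by
    intro x hx
    obtain ⟨hrec, m, hpres⟩ := h1 x hx
    obtain ⟨f, hf, hclose⟩ := (h2 m).exists_mem_gridCodebook_near (hα m) hab.le hpres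
    refine ⟨f, mem_biUnion.2 ⟨m, mem_univ m, hf⟩, ?_⟩
    calc ‖x - f‖ ≤ ‖x - θ (φ x)‖ + ‖θ (φ x) - f‖ := norm_sub_le_norm_sub_add_norm_sub _ _ _
      _ ≤ U := by linarith
  calc essence S U ≤ F.card := essence_le_card hF
    _ ≤ ∑ m, (gridCodebook θ a b (P m) (α m)).card := card_biUnion_le
    _ ≤ ∑ m, ∏ k ∈ P m, Q m k := sum_le_sum fun m _ =>
        card_gridCodebook_le.trans_eq (prod_congr rfl fun k hk => (hQ m k hk).symm)

/-- Combined form of Theorem 1: if every sample of `S` is reconstructed within `U/2`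
through a spectrum preserved by one of the observed spiking patterns `P m`, and the
decoder is `(U/2)`-robust w.r.t. each pattern, then the total size
`Σ_m ∏_{k ∈ P m} Q_{m,k}` of the quantization grids (with
`Q_{m,k} = ⌊(b-a)/(2α_{m,k})⌋ + 1`) is at least the `U`-essence of `S`. -/
theorem total_grid_size_ge_essence {D K M : ℕ}
    (S : Set (EuclideanSpace ℝ (Fin D))) (hS : S.Nonempty)
    (hSb : Bornology.IsBounded S)
    (U a b : ℝ) (hU : 0 < U) (ha : 0 < a) (hab : a < b)
    (φ : EuclideanSpace ℝ (Fin D) → EuclideanSpace ℝ (Fin K))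
    (θ : EuclideanSpace ℝ (Fin K) → EuclideanSpace ℝ (Fin D))
    (P : Fin M → Finset (Fin K)) (α : Fin M → Fin K → ℝ)
    (hα : ∀ m : Fin M, ∀ k ∈ P m, 0 < α m k)
    (h1 : ∀ x ∈ S, ‖x - θ (φ x)‖ ≤ U / 2 ∧ ∃ m : Fin M, Preserved a b (P m) (φ x))
    (h2 : ∀ m : Fin M, URobust a b (U / 2) (P m) (α m) θ)
    (Q : Fin M → Fin K → ℕ)
    (hQ : ∀ m : Fin M, ∀ k ∈ P m, Q m k = Nat.floor ((b - a) / (2 * α m k)) + 1) :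
    essence S U ≤ ∑ m : Fin M, ∏ k ∈ P m, Q m k :=
  total_grid_size_ge_essence_general S U a b hab φ θ P α hα h1 h2 Q hQ
end
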